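/- Let L = L_1 × ... × L_n be a product of finite lattices with building sets G_i ⊆ L_i \ {0̂}, embedded in L as above, and let G = ⋃_i G_i. For subsets S_i ⊆ G_i, the union S = ⋃_i S_i is G-nested if and only if each S_i is G_i-nested. -/
import Mathlib


/-- A building set for a lattice `L` with bottom element. -/
def IsBuildingSet {L : Type*} [Lattice L] [OrderBot L] (G : Set L) : Prop :=
  (⊥ : L) ∉ G ∧
    ∀ X : L, Nonempty
      ((Set.Iic X) ≃o ((Z : {Z : L // Maximal (· ∈ G ∩ Set.Iic X) Z}) → Set.Iic Z.1))

/-- `T` is `G`-nested: `T ⊆ G` and for any `t ≥ 2` pairwise incomparable elements of `T`,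
their join is not an element of `G`. -/
def IsNested {L : Type*} [Lattice L] [OrderBot L] (G T : Set L) : Prop :=
  T ⊆ G ∧ ∀ s : Finset L, ↑s ⊆ T → 2 ≤ s.card →
    (∀ x ∈ s, ∀ y ∈ s, x ≠ y → ¬x ≤ y ∧ ¬y ≤ x) → s.sup id ∉ G

/-- The embedding of `L i` into the product lattice, placing `⊥` in all other coordinates. -/
def latticeEmb {ι : Type*} [DecidableEq ι] (L : ι → Type*) [∀ i, Lattice (L i)]
    [∀ i, OrderBot (L i)] (i : ι) (x : L i) : ∀ j, L j :=
  Function.update (⊥ : ∀ j, L j) i x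

section Aux
variable {ι : Type*} [DecidableEq ι] {L : ι → Type*} [∀ i, Lattice (L i)] [∀ i, OrderBot (L i)]

lemma emb_self (i : ι) (x : L i) : latticeEmb L i x i = x := Function.update_self ..

lemma emb_ne {i j : ι} (h : j ≠ i) (x : L i) : latticeEmb L i x j = ⊥ := Function.update_of_ne h ..

lemma emb_inj (i : ι) : Function.Injective (latticeEmb L i) := fun x y h => by
  simpa [emb_self] using congrFun h i

lemma emb_le_emb {i : ι} {x y : L i} : latticeEmb L i x ≤ latticeEmb L i y ↔ x ≤ y := by
  constructor
  · intro h; simpa [emb_self] using h i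
  · intro h j
    by_cases hj : j = i
    · subst hj; simpa [emb_self] using h
    · simp [emb_ne hj]

end Aux


/-- For building sets `G i` of finite lattices `L i` and subsets `S i ⊆ G i`, the union
`⋃ i, S i` (embedded in the product lattice) is nested with respect to the union of the `G i`
if and only if each `S i` is `G i`-nested. -/
theorem union_isNested_iff {ι : Type*} [Fintype ι] [DecidableEq ι]
    (L : ι → Type*) [∀ i, Lattice (L i)] [∀ i, Fintype (L i)] [∀ i, OrderBot (L i)]
    (G : ∀ i, Set (L i)) (hG : ∀ i, IsBuildingSet (G i))
    (S : ∀ i, Set (L i)) (hS : ∀ i, S i ⊆ G i) :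
    IsNested (⋃ i, latticeEmb L i '' G i) (⋃ i, latticeEmb L i '' S i) ↔
      ∀ i, IsNested (G i) (S i) := by
  classical
  constructor
  · intro h i
    refine ⟨hS i, ?_⟩
    intro s hs hcard hinc hsup
    set e := latticeEmb L i with he
    have hsub : ↑(s.image e) ⊆ ⋃ i, latticeEmb L i '' S i := by
      intro x hx
      rcases Finset.mem_image.mp (by exact_mod_cast hx) with ⟨a, ha, rfl⟩
      exact Set.mem_iUnion.mpr ⟨i, a, hs ha, rfl⟩
    have hc : 2 ≤ (s.image e).card := by
      rwa [Finset.card_image_of_injective _ (emb_inj i)]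
    have hi : ∀ x ∈ s.image e, ∀ y ∈ s.image e, x ≠ y → ¬x ≤ y ∧ ¬y ≤ x := by
      intro x hx y hy hne
      rcases Finset.mem_image.mp hx with ⟨a, ha, rfl⟩
      rcases Finset.mem_image.mp hy with ⟨b, hb, rfl⟩
      have hab : a ≠ b := fun hh => hne (by rw [hh])
      have := hinc a ha b hb hab
      exact ⟨fun hle => this.1 (emb_le_emb.mp hle), fun hle => this.2 (emb_le_emb.mp hle)⟩
    have hsupeq : (s.image e).sup id = e (s.sup id) := by
      rw [Finset.sup_image]
      funext j
      rw [Finset.sup_apply]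
      by_cases hj : j = i
      · subst hj
        simp only [he, Function.comp]
        simp [emb_self]
        rfl
      · simp only [he, Function.comp]
        simp [emb_ne hj]
    exact h.2 (s.image e) hsub hc hi (hsupeq ▸ Set.mem_iUnion.mpr ⟨i, s.sup id, hsup, rfl⟩)
  · intro h
    constructor
    · intro x hx
      rcases Set.mem_iUnion.mp hx with ⟨i, y, hy, rfl⟩
      exact Set.mem_iUnion.mpr ⟨i, y, hS i hy, rfl⟩
    · intro s hs hcard hinc hsup
      rcases Set.mem_iUnion.mp hsup with ⟨j, y, hyG, hy⟩
      have hall : ∀ f ∈ s, f = latticeEmb L j (f j) ∧ f j ∈ S j := by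
        intro f hf
        rcases Set.mem_iUnion.mp (hs hf) with ⟨i, x, hxS, rfl⟩
        have hxne : x ≠ ⊥ := fun hh => (hG i).1 (hh ▸ hS i hxS)
        have hle : latticeEmb L i x ≤ latticeEmb L j y := hy ▸ Finset.le_sup (f := id) hf
        have hij : i = j := by
          by_contra hij
          have := hle i
          rw [emb_self, emb_ne (Ne.intro hij)] at this
          exact hxne (le_bot_iff.mp this)
        subst hij
        rw [emb_self]
        exact ⟨rfl, hxS⟩
      set t := s.image (fun f => f j) with ht
      have htS : ↑t ⊆ S j := by
        intro x hx
        rcases Finset.mem_image.mp (by exact_mod_cast hx) with ⟨f, hf, rfl⟩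
        exact (hall f hf).2
      have htc : 2 ≤ t.card := by
        rw [ht, Finset.card_image_of_injOn]
        · exact hcard
        · intro f hf g hg hfg
          simp only at hfg
          rw [(hall f hf).1, (hall g hg).1, hfg]
      have hti : ∀ x ∈ t, ∀ y ∈ t, x ≠ y → ¬x ≤ y ∧ ¬y ≤ x := by
        intro a ha b hb hne
        rcases Finset.mem_image.mp ha with ⟨f, hf, rfl⟩
        rcases Finset.mem_image.mp hb with ⟨g, hg, rfl⟩
        have hfg : f ≠ g := fun hh => hne (by rw [hh])
        have := hinc f hf g hg hfg
        constructor
        · intro hle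
          exact this.1 (by rw [(hall f hf).1, (hall g hg).1]; exact emb_le_emb.mpr hle)
        · intro hle
          exact this.2 (by rw [(hall g hg).1, (hall f hf).1]; exact emb_le_emb.mpr hle)
      have htsup : t.sup id = y := by
        rw [ht, Finset.sup_image]
        have : (s.sup id) j = y := by rw [← hy, emb_self]
        rw [← this, Finset.sup_apply]
        rfl
      exact (h j).2 t htS htc hti (htsup ▸ hyG)
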